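/- arXiv:math/0311022 — 5 statements merged into one kernel-verified Lean document; each statement's English description precedes it below -/
import Mathlib

section
/- Let ω : ℝ → ℝ and x ∈ ℝ with ω x ≠ x. For j ∈ ℕ let ω^[j] denote the j-th iterate of ω, and define the factors c_j(y) = (1 + ω^[j+1] y − ω^[j] y)⁻¹ and E(y) = ∏_{j=0}^∞ c_j(y) (tprod). Assume that for every j ∈ ℕ one has 1 + ω^[j+1] x − ω^[j] x ≠ 0, and that the family (c_j(x))_{j∈ℕ} is multipliable. Then E is an eigenfunction of the deformed derivative with eigenvalue 1: (E(ω x) − E(x))/(ω x − x) = E(x). -/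
private lemma hasProd_succ_div {f : ℕ → ℝ} {a : ℝ} (hf : HasProd f a) (h0 : f 0 ≠ 0) :
    HasProd (fun n => f (n + 1)) (a / f 0) := by
  classical
  have hmono : Monotone (fun s : Finset ℕ => insert 0 (s.image Nat.succ)) := by
    intro s t hst
    exact Finset.insert_subset_insert _ (Finset.image_subset_image hst)
  have htend : Filter.Tendsto (fun s : Finset ℕ => insert 0 (s.image Nat.succ))
      Filter.atTop Filter.atTop := by
    apply Filter.tendsto_atTop_finset_of_monotone hmono
    intro b
    cases b with
    | zero => exact ⟨∅, Finset.mem_insert_self _ _⟩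
    | succ n =>
      exact ⟨{n}, Finset.mem_insert_of_mem (Finset.mem_image_of_mem _ (Finset.mem_singleton_self n))⟩
  have key : ∀ s : Finset ℕ, ∏ i ∈ s, f (i + 1)
      = (∏ j ∈ insert 0 (s.image Nat.succ), f j) / f 0 := by
    intro s
    rw [Finset.prod_insert (by simp), Finset.prod_image (fun a _ b _ hab => Nat.succ_injective hab)]
    field_simp
  have : Filter.Tendsto (fun s : Finset ℕ => ∏ i ∈ s, f (i + 1))
      Filter.atTop (nhds (a / f 0)) := by
    simp only [key]
    exact (hf.comp htend).div_const _
  exact this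

/-- The infinite product `E(y) = ∏_{j=0}^∞ (1 + ω^[j+1] y - ω^[j] y)⁻¹` is an
eigenfunction with eigenvalue `1` of the deformed derivative
`D_ω f x = (f (ω x) - f x) / (ω x - x)`. -/
theorem deformed_exp_eigenfunction (ω : ℝ → ℝ) (x : ℝ) (h : ω x ≠ x)
    (c : ℕ → ℝ → ℝ) (hc : ∀ j y, c j y = (1 + ω^[j + 1] y - ω^[j] y)⁻¹)
    (E : ℝ → ℝ) (hE : ∀ y, E y = ∏' j : ℕ, c j y)
    (hne : ∀ j : ℕ, 1 + ω^[j + 1] x - ω^[j] x ≠ 0)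
    (hmul : Multipliable fun j : ℕ => c j x) :
    (E (ω x) - E x) / (ω x - x) = E x := by
  have hshift : ∀ j : ℕ, c j (ω x) = c (j + 1) x := by
    intro j
    rw [hc, hc, ← Function.iterate_succ_apply ω (j+1) x, ← Function.iterate_succ_apply ω j x]
  have hc0 : c 0 x = (1 + ω x - x)⁻¹ := by
    rw [hc]; simp
  have h0 := hne 0
  norm_num [Function.iterate_one, Function.iterate_zero] at h0
  have hc0ne : c 0 x ≠ 0 := by rw [hc0]; exact inv_ne_zero h0
  have hsp := hasProd_succ_div hmul.hasProd hc0ne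
  have hEωx : E (ω x) = E x / c 0 x := by
    rw [hE (ω x), tprod_congr hshift, hsp.tprod_eq, hE x]
  have hkey : E (ω x) = (1 + ω x - x) * E x := by
    rw [hEωx, hc0]
    field_simp
  rw [hkey]
  have hxy : ω x - x ≠ 0 := sub_ne_zero.mpr h
  field_simp
  ring
end

section
/- Let q ∈ ℝ with 0 < q < 1 and let x ∈ ℝ with x ≠ 0 be such that 1 + q^j(q − 1)x ≠ 0 for every j ∈ ℕ. Then the q-exponential is an eigenfunction of the q-derivative with eigenvalue 1: (E_q(qx) − E_q(x))/((q − 1)x) = E_q(x). -/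
/-!
Peeling off the `j = 0` factor of the product gives the functional equation
`E_q(x) = (1 + (q - 1) x)⁻¹ E_q(qx)`, i.e. `E_q(qx) - E_q(x) = (q - 1) x E_q(x)`.
Splitting off a factor needs the tail product to converge, which holds because the
terms `q^j (q - 1) y` are summable when `|q| < 1`.
-/

lemma Real.multipliable_inv_one_add_of_summable {ι : Type*} {f : ι → ℝ} (hf : Summable f) :
    Multipliable fun i ↦ (1 + f i)⁻¹ := by
  refine Real.multipliable_of_summable_log' ?_ ?_
  · filter_upwards [hf.tendsto_cofinite_zero.eventually_const_lt neg_one_lt_zero] with i hi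
    exact inv_pos.2 (by linarith)
  · simpa only [Real.log_inv] using (Real.summable_log_one_add_of_summable hf).neg

noncomputable def qExp (q y : ℝ) : ℝ :=
  ∏' j : ℕ, (1 + q ^ j * (q - 1) * y)⁻¹

lemma qExp_eq_inv_mul_qExp_mul {q : ℝ} (hq : |q| < 1) (y : ℝ) :
    qExp q y = (1 + (q - 1) * y)⁻¹ * qExp q (q * y) := by
  have hshift : ∀ j : ℕ, 1 + q ^ (j + 1) * (q - 1) * y = 1 + q ^ j * (q - 1) * (q * y) :=
    fun j ↦ by ring
  have hsum : Summable fun j : ℕ ↦ q ^ j * (q - 1) * (q * y) := by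
    simpa only [mul_assoc] using
      (summable_geometric_of_abs_lt_one hq).mul_right ((q - 1) * (q * y))
  have htail : Multipliable fun j : ℕ ↦ (1 + q ^ (j + 1) * (q - 1) * y)⁻¹ := by
    simpa only [hshift] using Real.multipliable_inv_one_add_of_summable hsum
  rw [qExp, tprod_eq_zero_mul' (f := fun j ↦ (1 + q ^ j * (q - 1) * y)⁻¹) htail]
  simp only [pow_zero, one_mul, hshift, qExp]

lemma qExp_mul {q y : ℝ} (hq : |q| < 1) (hy : 1 + (q - 1) * y ≠ 0) :
    qExp q (q * y) = (1 + (q - 1) * y) * qExp q y := by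
  rw [qExp_eq_inv_mul_qExp_mul hq y, mul_inv_cancel_left₀ hy]

/-- The `q`-exponential `E_q(y) = ∏_{j=0}^∞ (1 + q^j (q-1) y)⁻¹` is an
eigenfunction of the `q`-derivative with eigenvalue `1`. -/
theorem qExp_eigenfunction (q x : ℝ) (hq0 : 0 < q) (hq1 : q < 1) (hx : x ≠ 0)
    (hne : ∀ j : ℕ, 1 + q ^ j * (q - 1) * x ≠ 0)
    (E : ℝ → ℝ) (hE : ∀ y, E y = ∏' j : ℕ, (1 + q ^ j * (q - 1) * y)⁻¹) :
    (E (q * x) - E x) / ((q - 1) * x) = E x := by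
  obtain rfl : E = qExp q := funext hE
  have hq : |q| < 1 := abs_lt.2 ⟨by linarith, hq1⟩
  have hx0 : 1 + (q - 1) * x ≠ 0 := by simpa using hne 0
  have hqx : (q - 1) * x ≠ 0 := mul_ne_zero (sub_ne_zero.2 hq1.ne) hx
  rw [qExp_mul hq hx0, div_eq_iff hqx]
  ring
end

section
/- Let k, n be positive natural numbers and let λ, x ∈ ℝ satisfy |λ·k·x^k| < 1 and 1 + λ·k·x^k > 0. Then the exponential series for exp(−λ x^{k+1} ∂_x) applied to x^n converges and ∑_{m=0}^∞ ((−λ)^m / m!) · (∏_{i=0}^{m−1} (n + i·k)) · x^{n + m·k} = x^n · (1 + λ·k·x^k)^{−n/k}, where the right-hand side uses the real power (rpow) with exponent −n/k. -/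
/-!
Since `∏_{i<m} (n + i k) = k^m ∏_{i<m} (n/k + i)` and `(-1)^m ∏_{i<m} (r + i) / m!` is the
generalized binomial coefficient `choose (-r) m`, the series is `x^n` times the binomial series
of `(1 + z)^(-n/k)` at `z = λ k x^k`, which converges to it for `|z| < 1`.
-/

open Finset Nat

theorem Ring.choose_neg_eq_prod {K : Type*} [Field K] [CharZero K] (r : K) (m : ℕ) :
    Ring.choose (-r) m = (-1) ^ m * (∏ i ∈ range m, (r + i)) / m ! := by
  rw [Ring.choose_eq_smul, ← Polynomial.aeval_eq_smeval, ← Polynomial.eval_map_algebraMap,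
    descPochhammer_map, descPochhammer_eval_eq_prod_range, smul_eq_mul]
  simp only [← neg_add', prod_neg, card_range]
  ring

theorem Finset.prod_range_add_mul {K : Type*} [Field K] {c : K} (hc : c ≠ 0) (a : K) (m : ℕ) :
    ∏ i ∈ range m, (a + i * c) = c ^ m * ∏ i ∈ range m, (a / c + i) := by
  rw [pow_eq_prod_const, ← prod_mul_distrib]
  refine prod_congr rfl fun i _ => ?_
  field_simp

theorem Real.hasSum_choose_mul_pow {z : ℝ} (hz : |z| < 1) (a : ℝ) :
    HasSum (fun m : ℕ => Ring.choose a m * z ^ m) ((1 + z) ^ a) := by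
  have hz' : z ∈ Metric.eball (0 : ℝ) 1 := by
    rwa [Metric.mem_eball, edist_zero_right, ← ofReal_norm, ENNReal.ofReal_lt_one, Real.norm_eq_abs]
  simpa [binomialSeries, mul_comm] using
    Real.one_add_rpow_hasFPowerSeriesOnBall_zero.hasSum hz'

theorem expSeries_omega_monomial_general (k n : ℕ) (hk : 0 < k)
    (lam x : ℝ) (habs : |lam * k * x ^ k| < 1) :
    (Summable fun m : ℕ =>
        ((-lam) ^ m / m.factorial) *
          (∏ i ∈ Finset.range m, ((n : ℝ) + i * k)) * x ^ (n + m * k)) ∧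
      (∑' m : ℕ,
          ((-lam) ^ m / m.factorial) *
            (∏ i ∈ Finset.range m, ((n : ℝ) + i * k)) * x ^ (n + m * k))
        = x ^ n * (1 + lam * k * x ^ k) ^ (-(n : ℝ) / k) := by
  have hk' : (k : ℝ) ≠ 0 := by positivity
  have hsum := (Real.hasSum_choose_mul_pow habs (-(n : ℝ) / k)).mul_left (x ^ n)
  have hterm : ∀ m : ℕ, x ^ n * (Ring.choose (-(n : ℝ) / k) m * (lam * k * x ^ k) ^ m) =
      ((-lam) ^ m / m !) * (∏ i ∈ range m, ((n : ℝ) + i * k)) * x ^ (n + m * k) := by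
    intro m
    rw [neg_div, Ring.choose_neg_eq_prod, prod_range_add_mul hk', pow_add, mul_comm m k, pow_mul]
    ring
  simp only [hterm] at hsum
  exact ⟨hsum.summable, hsum.tsum_eq⟩

/-- The exponential series for `exp(-λ x^{k+1} ∂_x)` applied to `x^n` converges
and equals `x^n (1 + λ k x^k)^{-n/k}`. -/
theorem expSeries_omega_monomial (k n : ℕ) (hk : 0 < k) (hn : 0 < n)
    (lam x : ℝ) (habs : |lam * k * x ^ k| < 1) (hpos : 1 + lam * k * x ^ k > 0) :
    (Summable fun m : ℕ =>
        ((-lam) ^ m / m.factorial) *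
          (∏ i ∈ Finset.range m, ((n : ℝ) + i * k)) * x ^ (n + m * k)) ∧
      (∑' m : ℕ,
          ((-lam) ^ m / m.factorial) *
            (∏ i ∈ Finset.range m, ((n : ℝ) + i * k)) * x ^ (n + m * k))
        = x ^ n * (1 + lam * k * x ^ k) ^ (-(n : ℝ) / k) :=
  expSeries_omega_monomial_general k n hk lam x habs
end

section
/- Let k be a positive natural number and λ, μ, x ∈ ℝ with 1 + μ·k·x^k > 0 and 1 + (λ+μ)·k·x^k > 0. Define ω_{λ,k}(y) = y·(1 + λ·k·y^k)^{−1/k} (real rpow). Then ω_{λ,k}(ω_{μ,k}(x)) = ω_{λ+μ,k}(x). -/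
/-- Composition law `Ω_{λ,k} ∘ Ω_{μ,k} = Ω_{λ+μ,k}` for the maps
`ω_{λ,k}(y) = y (1 + λ k y^k)^{-1/k}`. -/
theorem omega_composition (k : ℕ) (hk : 0 < k) (lam mu x : ℝ)
    (hmu : 1 + mu * k * x ^ k > 0) (hlm : 1 + (lam + mu) * k * x ^ k > 0)
    (ω : ℝ → ℝ → ℝ)
    (hω : ∀ l y, ω l y = y * (1 + l * k * y ^ k) ^ (-(1 : ℝ) / k)) :
    ω lam (ω mu x) = ω (lam + mu) x := by
  set A : ℝ := 1 + mu * k * x ^ k with hA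
  set B : ℝ := 1 + (lam + mu) * k * x ^ k with hB
  have hkR : (k : ℝ) ≠ 0 := Nat.cast_ne_zero.mpr hk.ne'
  have hApos : (0:ℝ) < A := hmu
  have hBpos : (0:ℝ) < B := hlm
  have hpow : (x * A ^ (-(1:ℝ) / k)) ^ k = x ^ k * A⁻¹ := by
    rw [mul_pow, ← Real.rpow_natCast (A ^ (-(1:ℝ)/k)) k, ← Real.rpow_mul hApos.le]
    rw [div_mul_cancel₀ _ hkR, Real.rpow_neg_one]
  have hbase : 1 + lam * k * (x * A ^ (-(1:ℝ) / k)) ^ k = B / A := by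
    rw [hpow]
    field_simp
    ring
  rw [hω, hω, hω, hpow] -- unfold
  rw [show (1 + lam * ↑k * (x ^ k * A⁻¹)) = B / A by field_simp; ring]
  rw [mul_assoc, ← Real.mul_rpow hApos.le (div_nonneg hBpos.le hApos.le),
    mul_div_cancel₀ _ hApos.ne']
end

section
/- Let k be a positive natural number and λ, x ∈ ℝ with 1 + λ·k·x^k > 0. Define ω_{λ,k}(y) = y·(1 + λ·k·y^k)^{−1/k} (real rpow). Then ω_{−λ,k}(ω_{λ,k}(x)) = x; i.e. (Ω_{λ,k})⁻¹ = Ω_{−λ,k}. -/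
/-- Inverse law `(Ω_{λ,k})⁻¹ = Ω_{-λ,k}` for the maps
`ω_{λ,k}(y) = y (1 + λ k y^k)^{-1/k}`. -/
theorem omega_inverse (k : ℕ) (hk : 0 < k) (lam x : ℝ)
    (hpos : 1 + lam * k * x ^ k > 0)
    (ω : ℝ → ℝ → ℝ)
    (hω : ∀ l y, ω l y = y * (1 + l * k * y ^ k) ^ (-(1 : ℝ) / k)) :
    ω (-lam) (ω lam x) = x := by
  set A : ℝ := 1 + lam * k * x ^ k with hA
  have hA0 : 0 < A := hpos
  have hk0 : (k : ℝ) ≠ 0 := Nat.cast_ne_zero.mpr hk.ne'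
  have hpowk : (A ^ (-(1 : ℝ) / k)) ^ k = A⁻¹ := by
    rw [← Real.rpow_natCast (A ^ (-(1 : ℝ) / k)) k, ← Real.rpow_mul hA0.le]
    rw [div_mul_cancel₀ _ hk0, Real.rpow_neg_one]
  have hinner : 1 + (-lam) * k * (ω lam x) ^ k = A⁻¹ := by
    rw [hω, mul_pow, hpowk]
    field_simp
    ring
  rw [hω (-lam), hinner, hω, ← hA, Real.inv_rpow hA0.le, ← Real.rpow_neg hA0.le,
    mul_assoc, ← Real.rpow_add hA0]
  norm_num
end
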